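/- arXiv:0910.4205 — 5 statements merged into one kernel-verified Lean document; each statement's English description precedes it below -/
import Mathlib

section
/- Let f : [0, ζ_f] → ℝ and g : [0, ζ_g] → ℝ be continuous functions with g(0) = 0, and suppose f attains its minimum at its terminal time, i.e. f(ζ_f) = min_{0≤s≤ζ_f} f(s). Then reflecting at the running infimum commutes with concatenation: (f − f̲) ⊕ (g − g̲) = (f ⊕ g) − ((f ⊕ g))̲, where for a path h defined on [0, ζ_h], h̲(t) := min_{0≤s≤t} h(s) denotes its running infimum process. (This is the two-path case of the paper's concatenation lemma, from which the general finite case follows by induction.) -/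
/-!
Up to time `ζf` the concatenation is `f` itself. After `ζf` its running infimum is the smaller of
`min f = f ζf` and `f ζf + g̲`; since `g̲ ≤ g 0 = 0` the second term wins, so the infimum of
`f ⊕ g` at `ζf + u` is `f ζf + g̲ u`, and subtracting it leaves `0 + (g - g̲) u`.
-/

namespace IPC

/-- Running infimum process of a path: `runInf f t = min_{0 ≤ s ≤ t} f s`. -/
noncomputable def runInf (f : ℝ → ℝ) (t : ℝ) : ℝ := sInf (f '' Set.Icc 0 t)

/-- Concatenation of a stopped path `f`, with lifetime `ζf`, with a path `g`:
`(f ⊕ g)(t) = f t` for `t ≤ ζf` and `(f ⊕ g)(t) = f ζf + g (t - ζf)` for `t ≥ ζf`. -/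
noncomputable def pathConcat (f g : ℝ → ℝ) (ζf : ℝ) : ℝ → ℝ := fun t =>
  if t ≤ ζf then f t else f ζf + g (t - ζf)

/-- Reflection of a path at its running infimum: `f - f̲`. -/
noncomputable def reflect (f : ℝ → ℝ) : ℝ → ℝ := fun t => f t - runInf f t

open Set

theorem runInf_congr {f g : ℝ → ℝ} {t : ℝ} (h : EqOn f g (Icc 0 t)) :
    runInf f t = runInf g t := by
  rw [runInf, runInf, image_congr h]

theorem runInf_le {f : ℝ → ℝ} {s t : ℝ} (hf : BddBelow (f '' Icc 0 t)) (hs : s ∈ Icc 0 t) :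
    runInf f t ≤ f s :=
  csInf_le hf (mem_image_of_mem f hs)

section pathConcat

variable {f g : ℝ → ℝ} {ζf t : ℝ}

theorem pathConcat_of_le (ht : t ≤ ζf) : pathConcat f g ζf t = f t := if_pos ht

theorem pathConcat_of_lt (ht : ζf < t) : pathConcat f g ζf t = f ζf + g (t - ζf) :=
  if_neg ht.not_ge

theorem pathConcat_of_ge (hg0 : g 0 = 0) (ht : ζf ≤ t) :
    pathConcat f g ζf t = f ζf + g (t - ζf) := by
  rcases ht.eq_or_lt with rfl | ht
  · rw [pathConcat_of_le le_rfl, sub_self, hg0, add_zero]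
  · exact pathConcat_of_lt ht

theorem runInf_pathConcat_of_le (ht : t ≤ ζf) : runInf (pathConcat f g ζf) t = runInf f t :=
  runInf_congr fun _ hs ↦ pathConcat_of_le (hs.2.trans ht)

theorem image_pathConcat_Icc (hg0 : g 0 = 0) (hζf : 0 ≤ ζf) (ht : ζf ≤ t) :
    pathConcat f g ζf '' Icc 0 t
      = f '' Icc 0 ζf ∪ (f ζf + ·) '' (g '' Icc 0 (t - ζf)) := by
  rw [← Icc_union_Icc_eq_Icc hζf ht, image_union]
  congr 1
  · exact image_congr fun _ hs ↦ pathConcat_of_le hs.2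
  · rw [image_congr fun _ hs ↦ pathConcat_of_ge hg0 hs.1, image_image, ← sub_self ζf,
      ← image_sub_const_Icc, image_image]

theorem runInf_pathConcat (hg0 : g 0 = 0) (hζf : 0 ≤ ζf) (ht : ζf ≤ t)
    (hf : BddBelow (f '' Icc 0 ζf)) (hg : BddBelow (g '' Icc 0 (t - ζf))) :
    runInf (pathConcat f g ζf) t = min (runInf f ζf) (f ζf + runInf g (t - ζf)) := by
  have hgne : (g '' Icc 0 (t - ζf)).Nonempty := (nonempty_Icc.2 (sub_nonneg.2 ht)).image g
  have hshift_bdd : BddBelow ((f ζf + ·) '' (g '' Icc 0 (t - ζf))) :=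
    (OrderIso.addLeft (f ζf)).bddBelow_image.2 hg
  have hshift : sInf ((f ζf + ·) '' (g '' Icc 0 (t - ζf))) = f ζf + runInf g (t - ζf) :=
    ((OrderIso.addLeft (f ζf)).map_csInf' hgne hg).symm
  rw [runInf, image_pathConcat_Icc hg0 hζf ht,
    csInf_union hf ((nonempty_Icc.2 hζf).image f)
      hshift_bdd (hgne.image _), hshift]
  rfl

end pathConcat

theorem reflect_pathConcat_comm_general (f g : ℝ → ℝ) (ζf ζg : ℝ)
    (hζf : 0 ≤ ζf)
    (hf : ContinuousOn f (Set.Icc 0 ζf)) (hg : ContinuousOn g (Set.Icc 0 ζg))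
    (hg0 : g 0 = 0) (hmin : f ζf = sInf (f '' Set.Icc 0 ζf)) :
    ∀ t ∈ Set.Icc 0 (ζf + ζg),
      pathConcat (reflect f) (reflect g) ζf t
        = pathConcat f g ζf t - runInf (pathConcat f g ζf) t := by
  rintro t ⟨-, ht⟩
  rcases le_or_gt t ζf with htf | htf
  · rw [pathConcat_of_le htf, pathConcat_of_le htf, runInf_pathConcat_of_le htf, reflect]
  have hu : t - ζf ∈ Icc 0 ζg := ⟨by linarith, by linarith⟩
  have hgu : BddBelow (g '' Icc 0 (t - ζf)) :=
    isCompact_Icc.bddBelow_image (hg.mono (Icc_subset_Icc_right hu.2))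
  have hinf_g : runInf g (t - ζf) ≤ 0 := hg0 ▸ runInf_le hgu ⟨le_rfl, hu.1⟩
  have hinf_f : runInf f ζf = f ζf := hmin.symm
  rw [pathConcat_of_lt htf, pathConcat_of_lt htf,
    runInf_pathConcat hg0 hζf htf.le (isCompact_Icc.bddBelow_image hf) hgu, hinf_f,
    min_eq_right (by linarith), reflect, reflect, hinf_f]
  ring

/-- Reflecting at the running infimum commutes with concatenation:
if `f : [0, ζf] → ℝ` and `g : [0, ζg] → ℝ` are continuous, `g 0 = 0`, and `f` attains
its minimum at its terminal time `ζf`, then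
`(f − f̲) ⊕ (g − g̲) = (f ⊕ g) − ((f ⊕ g))̲` on `[0, ζf + ζg]`. -/
theorem reflect_pathConcat_comm (f g : ℝ → ℝ) (ζf ζg : ℝ)
    (hζf : 0 ≤ ζf) (hζg : 0 ≤ ζg)
    (hf : ContinuousOn f (Set.Icc 0 ζf)) (hg : ContinuousOn g (Set.Icc 0 ζg))
    (hg0 : g 0 = 0) (hmin : f ζf = sInf (f '' Set.Icc 0 ζf)) :
    ∀ t ∈ Set.Icc 0 (ζf + ζg),
      pathConcat (reflect f) (reflect g) ζf t
        = pathConcat f g ζf t - runInf (pathConcat f g ζf) t :=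
  reflect_pathConcat_comm_general f g ζf ζg hζf hf hg hg0 hmin

end IPC
end

section
/- Let T and S be finite plane trees, let v be the rightmost leaf of T (the lexicographically maximal vertex of T), and let R = T ⊕ S be the right-grafting of S on T, i.e. the plane tree with vertex set (T \ {v}) ∪ {v·w : w ∈ S}, obtained by identifying the root of S with v. Let V_T, V_S, V_R denote the Lukaciewicz paths of T, S, R respectively, and let V'_T be the restriction of V_T to {0, 1, …, #T − 1} (i.e. V_T without its final value −1). Then V_R = V'_T ⊕ V_S, where ⊕ denotes concatenation of integer-indexed paths: (P ⊕ Q)(t) = P(t) for 0 ≤ t ≤ m and (P ⊕ Q)(t) = P(m) + Q(t − m) for m ≤ t ≤ m + l, when P is defined on {0,…,m} and Q on {0,…,l} with Q(0) = 0. -/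
/-!
In lexicographic order every vertex of `T` other than its rightmost leaf `v` precedes `v`, and
`v` precedes all of `v·S`. So the depth-first enumeration of `T ⊕ S` lists the first `#T - 1`
vertices of `T` (with the same numbers of children, as only the leaf `v` was replaced) and then
the vertices `v·w`, in the order of `S` and with the numbers of children they have in `S`.
-/

namespace IPC
/-- A plane tree: a set of finite sequences of positive integers (vertices), containing
the root `[]`, closed under prefixes, closed under earlier siblings, with labels ≥ 1. -/
def IsPlaneTree (T : Set (List ℕ)) : Prop :=
  [] ∈ T ∧
  (∀ v ∈ T, ∀ u : List ℕ, u <+: v → u ∈ T) ∧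
  (∀ (v : List ℕ) (i j : ℕ), v ++ [i] ∈ T → 1 ≤ j → j ≤ i → v ++ [j] ∈ T) ∧
  (∀ v ∈ T, ∀ i ∈ v, 1 ≤ i)
/-- `kv T v` : number of children of the vertex `v` in `T`. -/
noncomputable def kv (T : Set (List ℕ)) (v : List ℕ) : ℕ := {i : ℕ | v ++ [i] ∈ T}.ncard
/-- `rank T v` : number of strict lexicographic predecessors of `v` in `T`. -/
noncomputable def rank (T : Set (List ℕ)) (v : List ℕ) : ℕ := {u ∈ T | u < v}.ncard
/-- Lukaciewicz path of `T`: `luk T n = ∑_{i<n} (k_{vⁱ} - 1)` where `vⁱ` is the `i`-th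
vertex of `T` in lexicographic order. -/
noncomputable def luk (T : Set (List ℕ)) (n : ℕ) : ℤ :=
  ∑ᶠ v ∈ {u ∈ T | rank T u < n}, ((kv T v : ℤ) - 1)
/-- `T^v`: the set of vertices of `T` lexicographically ≤ `v`. -/
def below (T : Set (List ℕ)) (v : List ℕ) : Set (List ℕ) := {u ∈ T | u ≤ v}
/-- `nEdge T v = n(v,T)`: the number of edges of `T` with exactly one endpoint in `T^v`;
an edge is identified with its child endpoint. -/
noncomputable def nEdge (T : Set (List ℕ)) (v : List ℕ) : ℕ :=
  {c ∈ T | c ≠ [] ∧ Xor' (c.dropLast ∈ below T v) (c ∈ below T v)}.ncard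

section ListLex

variable {α : Type*} [LinearOrder α]

theorem strictMono_append_left (v : List α) : StrictMono (v ++ · : List α → List α) :=
  fun _ _ h => List.append_left_lt h

theorem self_lt_append (v : List α) {w : List α} (hw : w ≠ []) : v < v ++ w := by
  obtain ⟨a, w, rfl⟩ := List.exists_cons_of_ne_nil hw
  simpa using strictMono_append_left v (List.nil_lt_cons a w)

theorem self_le_append (v w : List α) : v ≤ v ++ w := by
  rcases eq_or_ne w [] with rfl | hw
  · rw [List.append_nil]
  · exact (self_lt_append v hw).le

end ListLex

/-- The right-grafting `T ⊕ S`, when `v` is the rightmost leaf of `T`. -/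
def graft (T : Set (List ℕ)) (v : List ℕ) (S : Set (List ℕ)) : Set (List ℕ) :=
  (T \ {v}) ∪ (fun w => v ++ w) '' S

/-- The vertices `v⁰, …, vⁿ⁻¹` of `T`. -/
def firstVertices (T : Set (List ℕ)) (n : ℕ) : Set (List ℕ) := {u ∈ T | rank T u < n}

theorem firstVertices_subset (T : Set (List ℕ)) (n : ℕ) : firstVertices T n ⊆ T :=
  Set.sep_subset _ _

theorem luk_eq_finsum_firstVertices (T : Set (List ℕ)) (n : ℕ) :
    luk T n = ∑ᶠ u ∈ firstVertices T n, ((kv T u : ℤ) - 1) := rfl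

section Graft

variable {T S : Set (List ℕ)} {v : List ℕ}

theorem lt_of_mem_diff (hvmax : ∀ u ∈ T, u ≤ v) {u : List ℕ} (hu : u ∈ T \ {v}) : u < v :=
  (hvmax u hu.1).lt_of_ne hu.2

theorem disjoint_diff_image_append (hvmax : ∀ u ∈ T, u ≤ v) (A : Set (List ℕ)) :
    Disjoint (T \ {v}) ((fun w => v ++ w) '' A) := by
  rw [Set.disjoint_left]
  rintro _ hu ⟨w, -, rfl⟩
  exact (lt_of_mem_diff hvmax hu).not_ge (self_le_append v w)

theorem sep_lt_eq_diff (hvmax : ∀ u ∈ T, u ≤ v) : {u ∈ T | u < v} = T \ {v} := by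
  ext u
  exact ⟨fun hu => ⟨hu.1, hu.2.ne⟩, fun hu => ⟨hu.1, lt_of_mem_diff hvmax hu⟩⟩

theorem rank_eq_ncard_sub_one (hv : v ∈ T) (hvmax : ∀ u ∈ T, u ≤ v) :
    rank T v = T.ncard - 1 := by
  rw [rank, sep_lt_eq_diff hvmax, Set.ncard_sdiff_singleton_of_mem hv]

theorem rank_lt_ncard_sub_one (hv : v ∈ T) (hvmax : ∀ u ∈ T, u ≤ v) (hTfin : T.Finite)
    {u : List ℕ} (hu : u ∈ T \ {v}) : rank T u < T.ncard - 1 := by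
  have hsub : {x ∈ T | x < u} ⊆ {x ∈ T | x < v} :=
    fun x hx => ⟨hx.1, hx.2.trans (lt_of_mem_diff hvmax hu)⟩
  have hssub : {x ∈ T | x < u} ⊂ {x ∈ T | x < v} :=
    (Set.ssubset_iff_of_subset hsub).2 ⟨u, ⟨hu.1, lt_of_mem_diff hvmax hu⟩, fun h => h.2.false⟩
  rw [← rank_eq_ncard_sub_one hv hvmax]
  exact Set.ncard_lt_ncard hssub (hTfin.subset (Set.sep_subset _ _))

theorem rank_graft_of_mem (hvmax : ∀ u ∈ T, u ≤ v) {u : List ℕ} (hu : u ∈ T \ {v}) :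
    rank (graft T v S) u = rank T u := by
  have huv := lt_of_mem_diff hvmax hu
  unfold rank
  congr 1
  ext x
  constructor
  · rintro ⟨⟨hx, -⟩ | ⟨w, -, rfl⟩, hxu⟩
    · exact ⟨hx, hxu⟩
    · exact absurd (hxu.trans huv) (self_le_append v w).not_gt
  · rintro ⟨hx, hxu⟩
    exact ⟨Or.inl ⟨hx, (hxu.trans huv).ne⟩, hxu⟩

theorem rank_graft_append (hv : v ∈ T) (hvmax : ∀ u ∈ T, u ≤ v) (hTfin : T.Finite)
    (hSfin : S.Finite) (w : List ℕ) :
    rank (graft T v S) (v ++ w) = T.ncard - 1 + rank S w := by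
  have hset : {x ∈ graft T v S | x < v ++ w}
      = (T \ {v}) ∪ (fun w' => v ++ w') '' {w' ∈ S | w' < w} := by
    ext x
    constructor
    · rintro ⟨hx | ⟨w', hw', rfl⟩, hlt⟩
      · exact Or.inl hx
      · exact Or.inr ⟨w', ⟨hw', (strictMono_append_left v).lt_iff_lt.1 hlt⟩, rfl⟩
    · rintro (hx | ⟨w', ⟨hw', hlt⟩, rfl⟩)
      · exact ⟨Or.inl hx, (lt_of_mem_diff hvmax hx).trans_le (self_le_append v w)⟩
      · exact ⟨Or.inr ⟨w', hw', rfl⟩, List.append_left_lt hlt⟩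
  rw [rank, hset, Set.ncard_union_eq (disjoint_diff_image_append hvmax _) hTfin.sdiff
    ((hSfin.subset (Set.sep_subset _ _)).image _), Set.ncard_sdiff_singleton_of_mem hv,
    Set.ncard_image_of_injective _ (List.append_right_injective v), rank]

theorem kv_graft_of_mem (hS : [] ∈ S) (hv : v ∈ T) (hvmax : ∀ u ∈ T, u ≤ v)
    {u : List ℕ} (hu : u ∈ T \ {v}) : kv (graft T v S) u = kv T u := by
  unfold kv
  congr 1
  ext i
  constructor
  · rintro (⟨h, -⟩ | ⟨w, -, he⟩)
    · exact h
    · change v ++ w = u ++ [i] at he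
      rcases List.eq_nil_or_concat w with rfl | ⟨L, b, rfl⟩
      · rw [List.append_nil] at he
        exact show u ++ [i] ∈ T from he ▸ hv
      -- `v·L·b = u·i` would make `v` a prefix of `u < v`
      · rw [List.concat_eq_append, ← List.append_assoc] at he
        have hvu : v ++ L = u := (List.append_inj' he rfl).1
        exact absurd (hvu ▸ self_le_append v L) (lt_of_mem_diff hvmax hu).not_ge
  · intro h
    by_cases hui : u ++ [i] = v
    · exact Or.inr ⟨[], hS, (List.append_nil v).trans hui.symm⟩
    · exact Or.inl ⟨h, hui⟩

theorem kv_graft_append (hvmax : ∀ u ∈ T, u ≤ v) (w : List ℕ) :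
    kv (graft T v S) (v ++ w) = kv S w := by
  unfold kv
  congr 1
  ext i
  change v ++ w ++ [i] ∈ graft T v S ↔ w ++ [i] ∈ S
  rw [List.append_assoc]
  constructor
  · rintro (⟨h, -⟩ | ⟨w', hw', he⟩)
    · exact absurd (hvmax _ h) (self_lt_append v (by simp)).not_ge
    · exact List.append_cancel_left he ▸ hw'
  · exact fun h => Or.inr ⟨w ++ [i], h, rfl⟩

theorem firstVertices_eq_diff (hv : v ∈ T) (hvmax : ∀ u ∈ T, u ≤ v) (hTfin : T.Finite) :
    firstVertices T (T.ncard - 1) = T \ {v} := by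
  ext u
  constructor
  · rintro ⟨hu, hlt⟩
    refine ⟨hu, fun huv => ?_⟩
    rw [Set.mem_singleton_iff.1 huv, rank_eq_ncard_sub_one hv hvmax] at hlt
    exact hlt.false
  · exact fun hu => ⟨hu.1, rank_lt_ncard_sub_one hv hvmax hTfin hu⟩

theorem firstVertices_graft_of_le (hv : v ∈ T) (hvmax : ∀ u ∈ T, u ≤ v) (hTfin : T.Finite)
    (hSfin : S.Finite) {t : ℕ} (ht : t ≤ T.ncard - 1) :
    firstVertices (graft T v S) t = firstVertices T t := by
  ext u
  constructor
  · rintro ⟨hu | ⟨w, -, rfl⟩, hlt⟩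
    · exact ⟨hu.1, rank_graft_of_mem hvmax hu ▸ hlt⟩
    · rw [rank_graft_append hv hvmax hTfin hSfin w] at hlt
      omega
  · rintro ⟨hu, hlt⟩
    have hu' : u ∈ T \ {v} := by
      rw [← firstVertices_eq_diff hv hvmax hTfin]
      exact ⟨hu, hlt.trans_le ht⟩
    exact ⟨Or.inl hu', (rank_graft_of_mem hvmax hu').symm ▸ hlt⟩

theorem firstVertices_graft_add (hv : v ∈ T) (hvmax : ∀ u ∈ T, u ≤ v) (hTfin : T.Finite)
    (hSfin : S.Finite) (t : ℕ) :
    firstVertices (graft T v S) (T.ncard - 1 + t)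
      = (T \ {v}) ∪ (fun w => v ++ w) '' firstVertices S t := by
  ext u
  constructor
  · rintro ⟨hu | ⟨w, hw, rfl⟩, hlt⟩
    · exact Or.inl hu
    · rw [rank_graft_append hv hvmax hTfin hSfin w] at hlt
      exact Or.inr ⟨w, ⟨hw, by omega⟩, rfl⟩
  · rintro (hu | ⟨w, ⟨hw, hlt⟩, rfl⟩)
    · refine ⟨Or.inl hu, ?_⟩
      rw [rank_graft_of_mem hvmax hu]
      exact (rank_lt_ncard_sub_one hv hvmax hTfin hu).trans_le (Nat.le_add_right _ _)
    · refine ⟨Or.inr ⟨w, hw, rfl⟩, ?_⟩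
      rw [rank_graft_append hv hvmax hTfin hSfin w]
      omega

theorem luk_graft_of_le (hS : [] ∈ S) (hv : v ∈ T) (hvmax : ∀ u ∈ T, u ≤ v)
    (hTfin : T.Finite) (hSfin : S.Finite) {t : ℕ} (ht : t ≤ T.ncard - 1) :
    luk (graft T v S) t = luk T t := by
  rw [luk_eq_finsum_firstVertices, luk_eq_finsum_firstVertices,
    firstVertices_graft_of_le hv hvmax hTfin hSfin ht]
  refine finsum_mem_congr rfl fun u hu => ?_
  have hu' : u ∈ T \ {v} := by
    rw [← firstVertices_eq_diff hv hvmax hTfin]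
    exact ⟨hu.1, hu.2.trans_le ht⟩
  rw [kv_graft_of_mem hS hv hvmax hu']

theorem luk_graft_add (hS : [] ∈ S) (hv : v ∈ T) (hvmax : ∀ u ∈ T, u ≤ v)
    (hTfin : T.Finite) (hSfin : S.Finite) (t : ℕ) :
    luk (graft T v S) (T.ncard - 1 + t) = luk T (T.ncard - 1) + luk S t := by
  rw [luk_eq_finsum_firstVertices, firstVertices_graft_add hv hvmax hTfin hSfin,
    finsum_mem_union (disjoint_diff_image_append hvmax _) hTfin.sdiff
      ((hSfin.subset (firstVertices_subset S t)).image _),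
    finsum_mem_image (List.append_right_injective v).injOn,
    luk_eq_finsum_firstVertices, firstVertices_eq_diff hv hvmax hTfin,
    luk_eq_finsum_firstVertices]
  congr 1
  · exact finsum_mem_congr rfl fun u hu => by rw [kv_graft_of_mem hS hv hvmax hu]
  · exact finsum_mem_congr rfl fun w _ => by rw [kv_graft_append hvmax]

end Graft

theorem luk_right_graft_general (T S : Set (List ℕ)) (hS : IsPlaneTree S)
    (hTfin : T.Finite) (hSfin : S.Finite)
    (v : List ℕ) (hv : v ∈ T) (hvmax : ∀ u ∈ T, u ≤ v) :
    (∀ t : ℕ, t ≤ T.ncard - 1 →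
      luk ((T \ {v}) ∪ (fun w => v ++ w) '' S) t = luk T t) ∧
    (∀ t : ℕ, t ≤ S.ncard →
      luk ((T \ {v}) ∪ (fun w => v ++ w) '' S) (T.ncard - 1 + t)
        = luk T (T.ncard - 1) + luk S t) :=
  ⟨fun _ ht => luk_graft_of_le hS.1 hv hvmax hTfin hSfin ht,
    fun t _ => luk_graft_add hS.1 hv hvmax hTfin hSfin t⟩

/-- Right-grafting and Lukaciewicz paths: if `v` is the rightmost leaf
of the finite plane tree `T` and `R = T ⊕ S` is obtained from `T` by identifying the
root of `S` with `v`, then the Lukaciewicz path of `R` is the concatenation of the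
Lukaciewicz path of `T` stopped at `#T - 1` with the Lukaciewicz path of `S`. -/
theorem luk_right_graft (T S : Set (List ℕ)) (hT : IsPlaneTree T) (hS : IsPlaneTree S)
    (hTfin : T.Finite) (hSfin : S.Finite)
    (v : List ℕ) (hv : v ∈ T) (hvmax : ∀ u ∈ T, u ≤ v) :
    (∀ t : ℕ, t ≤ T.ncard - 1 →
      luk ((T \ {v}) ∪ (fun w => v ++ w) '' S) t = luk T t) ∧
    (∀ t : ℕ, t ≤ S.ncard →
      luk ((T \ {v}) ∪ (fun w => v ++ w) '' S) (T.ncard - 1 + t)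
        = luk T (T.ncard - 1) + luk S t) :=
  luk_right_graft_general T S hS hTfin hSfin v hv hvmax

end IPC
end

section
/- (Right description of the Lukaciewicz path.) Let θ be a finite plane tree with Lukaciewicz path V and lexicographic enumeration v⁰ < v¹ < … < v^{#θ−1} of its vertices. Then for every 0 ≤ k ≤ #θ − 1, V(k+1) = n(v^k, θ) − 1, where n(v, θ) is the number of edges of θ having exactly one endpoint in θ^v = {u ∈ θ : u ≤ v}. -/
namespace IPC
/-! Since a parent is a proper prefix of its child, it precedes the child lexicographically;
hence rank is strictly monotone, the vertices of rank at most `k` form exactly `θ^v`, and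
`θ^v` is closed under taking parents. Counting edges by their parent, `∑_{u ∈ θ^v} k_u` is the
number of edges whose parent lies in `θ^v`. By the closure property, such an edge either has
its child in `θ^v` as well (these edges correspond to the non-root vertices of `θ^v`) or has
exactly one endpoint in `θ^v`, and every edge with exactly one endpoint in `θ^v` is of the
second kind. Hence `V(k+1) = ∑_{u ∈ θ^v} (k_u - 1) = (#θ^v - 1) + n(v,θ) - #θ^v`. -/

lemma _root_.List.dropLast_lt {α : Type*} [LinearOrder α] {c : List α} (hc : c ≠ []) :
    c.dropLast < c := by
  have := List.append_left_lt (l₁ := c.dropLast) (List.nil_lt_cons (c.getLast hc) [])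
  rwa [List.append_nil, List.dropLast_append_getLast] at this

section
variable {T : Set (List ℕ)}

lemma rank_lt_rank (hT : T.Finite) {a b : List ℕ} (ha : a ∈ T) (hab : a < b) :
    rank T a < rank T b :=
  Set.ncard_lt_ncard ⟨fun _ hu => ⟨hu.1, hu.2.trans hab⟩, fun h => (h ⟨ha, hab⟩).2.false⟩
    (hT.subset fun _ hu => hu.1)

lemma rank_le_rank_iff (hT : T.Finite) {u v : List ℕ} (hu : u ∈ T) (hv : v ∈ T) :
    rank T u ≤ rank T v ↔ u ≤ v := by
  refine ⟨fun h => not_lt.1 fun hvu => (rank_lt_rank hT hv hvu).not_ge h, fun h => ?_⟩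
  obtain h | rfl := h.lt_or_eq
  exacts [(rank_lt_rank hT hu h).le, le_rfl]

lemma luk_rank_add_one (hT : T.Finite) {v : List ℕ} (hv : v ∈ T) :
    luk T (rank T v + 1) = ∑ᶠ u ∈ below T v, ((kv T u : ℤ) - 1) := by
  rw [luk, below,
    Set.sep_ext_iff.2 fun u hu => Nat.lt_add_one_iff.trans (rank_le_rank_iff hT hu hv)]

lemma kv_eq_ncard (T : Set (List ℕ)) (u : List ℕ) :
    kv T u = {c ∈ T | c ≠ [] ∧ c.dropLast = u}.ncard := by
  have : {c ∈ T | c ≠ [] ∧ c.dropLast = u} = (u ++ [·]) '' {i | u ++ [i] ∈ T} := by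
    ext c
    constructor
    · rintro ⟨hc, hne, rfl⟩
      exact ⟨c.getLast hne, by rwa [Set.mem_ofPred_eq, List.dropLast_append_getLast],
        List.dropLast_append_getLast hne⟩
    · rintro ⟨i, hi, rfl⟩
      simpa using hi
  rw [kv, this, Set.ncard_image_of_injective _ fun i j h => by simpa using h]

lemma finsum_mem_kv (hT : T.Finite) {B : Set (List ℕ)} (hB : B.Finite) :
    ∑ᶠ u ∈ B, kv T u = {c ∈ T | c ≠ [] ∧ c.dropLast ∈ B}.ncard := by
  have : {c ∈ T | c ≠ [] ∧ c.dropLast ∈ B} = ⋃ u ∈ B, {c ∈ T | c ≠ [] ∧ c.dropLast = u} := by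
    ext c
    simp
  rw [this, hB.ncard_biUnion (fun _ _ => hT.subset fun _ hc => hc.1)]
  · exact finsum_mem_congr rfl fun u _ => kv_eq_ncard T u
  · exact fun u _ w _ huw => Set.disjoint_left.2 fun c hu hw => huw (hu.2.2.symm.trans hw.2.2)

lemma finsum_mem_kv_sub_one (hT : T.Finite) {B : Set (List ℕ)} (hB : B.Finite) :
    ∑ᶠ u ∈ B, ((kv T u : ℤ) - 1) = {c ∈ T | c ≠ [] ∧ c.dropLast ∈ B}.ncard - B.ncard := by
  rw [finsum_mem_sub_distrib _ _ hB, ← Nat.cast_finsum_mem hB, finsum_mem_kv hT hB,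
    ← finsum_one (s := B), Nat.cast_finsum_mem hB, Nat.cast_one]

lemma ncard_dropLast_mem_of_closed (hT : T.Finite) {B : Set (List ℕ)} (hBT : B ⊆ T)
    (hB : ∀ c ∈ B, c ≠ [] → c.dropLast ∈ B) :
    {c ∈ T | c ≠ [] ∧ c.dropLast ∈ B}.ncard =
      (B \ {[]}).ncard + {c ∈ T | c ≠ [] ∧ Xor (c.dropLast ∈ B) (c ∈ B)}.ncard := by
  have : {c ∈ T | c ≠ [] ∧ c.dropLast ∈ B} =
      B \ {[]} ∪ {c ∈ T | c ≠ [] ∧ Xor (c.dropLast ∈ B) (c ∈ B)} := by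
    ext c
    simp only [Set.mem_ofPred_eq, Set.mem_union, Set.mem_sdiff, Set.mem_singleton_iff, Xor]
    grind
  rw [this, Set.ncard_union_eq _ (hT.subset hBT).sdiff (hT.subset fun _ hc => hc.1)]
  exact Set.disjoint_left.2 fun c hc hx =>
    hx.2.2.elim (fun h => h.2 hc.1) fun h => h.2 (hB c hc.1 hx.2.1)

lemma dropLast_mem_below (hT : ∀ w ∈ T, ∀ u, u <+: w → u ∈ T) {v c : List ℕ}
    (hc : c ∈ below T v) (hne : c ≠ []) : c.dropLast ∈ below T v :=
  ⟨hT c hc.1 _ (List.dropLast_prefix c), ((List.dropLast_lt hne).trans_le hc.2).le⟩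

lemma nil_mem_below (h : [] ∈ T) (v : List ℕ) : [] ∈ below T v :=
  ⟨h, by rcases v with _ | ⟨a, l⟩; exacts [le_rfl, (List.nil_lt_cons a l).le]⟩

end

theorem luk_right_description_general (θ : Set (List ℕ)) (hθ : IsPlaneTree θ) (hfin : θ.Finite)
    (k : ℕ) (v : List ℕ) (hv : v ∈ θ) (hrk : rank θ v = k) :
    luk θ (k + 1) = (nEdge θ v : ℤ) - 1 := by
  obtain ⟨hroot, hpref, -, -⟩ := hθ
  have hB : (below θ v).Finite := hfin.subset fun _ hu => hu.1
  have hsplit := ncard_dropLast_mem_of_closed (B := below θ v) hfin (fun _ hu => hu.1)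
    fun _ hc hne => dropLast_mem_below hpref hc hne
  rw [← hrk, luk_rank_add_one hfin hv, finsum_mem_kv_sub_one hfin hB, hsplit,
    ← Set.ncard_sdiff_singleton_add_one (nil_mem_below hroot v) hB]
  push_cast
  -- `nEdge` is phrased with `Xor'`, which unfolds to `Xor`
  exact add_sub_add_left_eq_sub _ _ _

/-- Right description of the Lukaciewicz path: if `v` is the vertex of
rank `k` in the lexicographic order of a finite plane tree `θ`, then
`V(k+1) = n(v,θ) - 1`, where `n(v,θ)` counts the edges of `θ` with exactly one endpoint
in `θ^v = {u ∈ θ : u ≤ v}`. -/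
theorem luk_right_description (θ : Set (List ℕ)) (hθ : IsPlaneTree θ) (hfin : θ.Finite)
    (k : ℕ) (hk : k + 1 ≤ θ.ncard) (v : List ℕ) (hv : v ∈ θ) (hrk : rank θ v = k) :
    luk θ (k + 1) = (nEdge θ v : ℤ) - 1 :=
  luk_right_description_general θ hθ hfin k v hv hrk

end IPC
end

section
/- Let θ be a finite plane tree with Lukaciewicz path V, lexicographic enumeration v⁰ < v¹ < … < v^{#θ−1} of its vertices, and height function H(n) = |v^n| (the length of the sequence v^n, i.e. its distance to the root). Then for every 0 ≤ n ≤ #θ − 1, H(n) = #{ k ∈ {0, 1, …, n−1} : V(k) = min{V(k), V(k+1), …, V(n)} }. -/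
namespace List

variable {α : Type*} [LinearOrder α]

theorem append_lt_append_left_iff (p : List α) {l₁ l₂ : List α} :
    p ++ l₁ < p ++ l₂ ↔ l₁ < l₂ := by
  induction p with
  | nil => rfl
  | cons a p ih => simpa using ih

theorem isPrefix_or_exists_of_lt {u w : List α} (h : u < w) :
    u <+: w ∨ ∃ (p : List α) (s t : α) (u' w' : List α),
      s < t ∧ u = p ++ s :: u' ∧ w = p ++ t :: w' := by
  induction h with
  | nil => exact Or.inl nil_prefix
  | @rel a u' b w' hab => exact Or.inr ⟨[], a, b, u', w', hab, rfl, rfl⟩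
  | @cons a u w _ ih =>
    rcases ih with ⟨r, rfl⟩ | ⟨p, s, t, u', w', hst, rfl, rfl⟩
    · exact Or.inl ⟨r, rfl⟩
    · exact Or.inr ⟨a :: p, s, t, u', w', hst, rfl, rfl⟩

theorem append_lt_of_lt_of_not_isPrefix {u x : List α} (h : u < x) (hp : ¬u <+: x)
    (r : List α) : u ++ r < x := by
  obtain hp' | ⟨p, s, t, u', x', hst, rfl, rfl⟩ := isPrefix_or_exists_of_lt h
  · exact absurd hp' hp
  · simpa using (append_lt_append_left_iff p).2 (cons_lt_cons_iff.2 (Or.inl hst) :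
      s :: (u' ++ r) < t :: x')

theorem IsPrefix.isPrefix_of_le_of_le {u x w : List α} (hw : u <+: w) (hux : u ≤ x)
    (hxw : x ≤ w) : u <+: x := by
  rcases hux.eq_or_lt with rfl | hlt
  · exact prefix_rfl
  by_contra hp
  obtain ⟨r, rfl⟩ := hw
  exact (append_lt_of_lt_of_not_isPrefix hlt hp r).not_ge hxw

theorem exists_cons_of_lt_of_lt_append_singleton {p x : List α} {a : α} (h₁ : p < x)
    (h₂ : x < p ++ [a]) : ∃ c x', x = p ++ c :: x' ∧ c < a := by
  by_cases hp : p <+: x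
  · obtain ⟨_ | ⟨c, x'⟩, rfl⟩ := hp
    · simp at h₁
    · refine ⟨c, x', rfl, ?_⟩
      simpa [cons_lt_cons_iff] using (append_lt_append_left_iff p).1 h₂
  · exact absurd h₂ (append_lt_of_lt_of_not_isPrefix h₁ hp [a]).not_gt

theorem lt_append_of_ne_nil (p : List α) {t : List α} (ht : t ≠ []) : p < p ++ t := by
  obtain ⟨c, t', rfl⟩ := exists_cons_of_ne_nil ht
  simpa using (append_lt_append_left_iff p).2 (nil_lt_cons c t')

theorem dropLast_lt_self {w : List α} (hw : w ≠ []) : w.dropLast < w := by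
  obtain ⟨p, a, rfl⟩ := (eq_nil_or_concat' w).resolve_left hw
  simpa using lt_append_of_ne_nil p (cons_ne_nil a [])

end List

namespace IPC

variable {θ : Set (List ℕ)}

theorem IsPlaneTree.nil_mem (hθ : IsPlaneTree θ) : [] ∈ θ := hθ.1

theorem IsPlaneTree.mem_of_isPrefix (hθ : IsPlaneTree θ) {u v : List ℕ} (hv : v ∈ θ)
    (h : u <+: v) : u ∈ θ :=
  hθ.2.1 v hv u h

theorem IsPlaneTree.append_singleton_mem_of_le (hθ : IsPlaneTree θ) {p : List ℕ} {i j : ℕ}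
    (h : p ++ [i] ∈ θ) (hj : 1 ≤ j) (hji : j ≤ i) : p ++ [j] ∈ θ :=
  hθ.2.2.1 p i j h hj hji

theorem rank_strictMonoOn (hfin : θ.Finite) : StrictMonoOn (rank θ) θ := by
  intro u hu w _ huw
  refine Set.ncard_lt_ncard ⟨fun x hx => ⟨hx.1, hx.2.trans huw⟩, fun hsub => ?_⟩
    (hfin.subset (Set.sep_subset _ _))
  exact lt_irrefl u (hsub ⟨hu, huw⟩).2

theorem rank_lt_ncard (hfin : θ.Finite) {v : List ℕ} (hv : v ∈ θ) : rank θ v < θ.ncard :=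
  Set.ncard_lt_ncard ⟨Set.sep_subset _ _, fun hsub => lt_irrefl v (hsub hv).2⟩ hfin

theorem rank_surjOn (hfin : θ.Finite) : Set.SurjOn (rank θ) θ (Set.Iio θ.ncard) := by
  have hmaps : Set.MapsTo (rank θ) θ (Set.Iio θ.ncard) := fun v hv => rank_lt_ncard hfin hv
  refine (Set.eq_of_subset_of_ncard_le hmaps.image_subset ?_ (Set.finite_Iio _)).symm.subset
  rw [Set.ncard_Iio_nat, (rank_strictMonoOn hfin).injOn.ncard_image]

theorem kv_eq_ncard_image (θ : Set (List ℕ)) (u : List ℕ) :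
    kv θ u = ((u ++ [·]) '' {i | u ++ [i] ∈ θ}).ncard :=
  (Set.ncard_image_of_injective _ fun _ _ h => by simpa using h).symm

theorem sum_kv_eq_ncard (hθ : IsPlaneTree θ) (hfin : θ.Finite) (v : List ℕ) :
    ∑ᶠ u ∈ {u ∈ θ | u < v}, kv θ u = {w ∈ θ | w ≠ [] ∧ w.dropLast < v}.ncard := by
  have hunion : ⋃ u ∈ {u ∈ θ | u < v}, (u ++ [·]) '' {i | u ++ [i] ∈ θ} =
      {w ∈ θ | w ≠ [] ∧ w.dropLast < v} := by
    ext w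
    simp only [Set.mem_iUnion, Set.mem_image, Set.mem_ofPred_eq, exists_prop]
    constructor
    · rintro ⟨u, ⟨-, huv⟩, i, hi, rfl⟩
      simpa using ⟨hi, huv⟩
    · rintro ⟨hw, hne, hwv⟩
      obtain ⟨p, a, rfl⟩ := (List.eq_nil_or_concat' w).resolve_left hne
      rw [List.dropLast_concat] at hwv
      exact ⟨p, ⟨hθ.mem_of_isPrefix hw (List.prefix_append _ _), hwv⟩, a, hw, rfl⟩
  have hdisj : Set.PairwiseDisjoint {u ∈ θ | u < v} fun u => (u ++ [·]) '' {i | u ++ [i] ∈ θ} := by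
    intro u _ u' _ hne
    refine Set.disjoint_left.2 ?_
    rintro _ ⟨i, -, rfl⟩ ⟨j, -, h⟩
    exact hne (List.append_inj' h rfl).1.symm
  simp_rw [kv_eq_ncard_image, ← hunion]
  refine ((hfin.subset (Set.sep_subset _ _)).ncard_biUnion (fun u _ => ?_) hdisj).symm
  exact hfin.subset (Set.image_subset_iff.2 fun _ hi => hi)

theorem ncard_nonroot_le_eq_rank (hθ : IsPlaneTree θ) (hfin : θ.Finite) {v : List ℕ}
    (hv : v ∈ θ) : {w ∈ θ | w ≠ [] ∧ w ≤ v}.ncard = rank θ v := by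
  have hle_v : {w ∈ θ | w ≤ v} = insert v {u ∈ θ | u < v} := by
    ext w
    simp only [Set.mem_insert_iff, Set.mem_ofPred_eq, le_iff_eq_or_lt]
    constructor
    · rintro ⟨hw, rfl | hlt⟩ <;> simp_all
    · rintro (rfl | ⟨hw, hlt⟩) <;> simp_all
  have hle_root : {w ∈ θ | w ≤ v} = insert [] {w ∈ θ | w ≠ [] ∧ w ≤ v} := by
    ext w
    rcases eq_or_ne w [] with rfl | hne
    · simp [hθ.nil_mem, not_lt.1 (List.not_lt_nil v)]
    · simp [hne]
  have h := congrArg Set.ncard (hle_root.symm.trans hle_v)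
  rwa [Set.ncard_insert_of_notMem (by simp) (hfin.subset fun _ h => h.1),
    Set.ncard_insert_of_notMem (by simp) (hfin.subset (Set.sep_subset _ _)),
    Nat.add_right_cancel_iff] at h

/-- The stack of the depth-first traversal of `θ` when it reaches `v`. -/
def pending (θ : Set (List ℕ)) (v : List ℕ) : Set (List ℕ) :=
  {w ∈ θ | w ≠ [] ∧ w.dropLast < v ∧ v < w}

theorem ncard_dropLast_lt_eq_rank_add (hθ : IsPlaneTree θ) (hfin : θ.Finite) {v : List ℕ}
    (hv : v ∈ θ) : {w ∈ θ | w ≠ [] ∧ w.dropLast < v}.ncard = rank θ v + (pending θ v).ncard := by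
  have hsplit : {w ∈ θ | w ≠ [] ∧ w.dropLast < v} = {w ∈ θ | w ≠ [] ∧ w ≤ v} ∪ pending θ v := by
    ext w
    simp only [pending, Set.mem_union, Set.mem_ofPred_eq]
    constructor
    · rintro ⟨hw, hne, hwv⟩
      exact (le_or_gt w v).imp (fun h => ⟨hw, hne, h⟩) fun h => ⟨hw, hne, hwv, h⟩
    · rintro (⟨hw, hne, hwv⟩ | ⟨hw, hne, hwv, -⟩)
      · exact ⟨hw, hne, (List.dropLast_lt_self hne).trans_le hwv⟩
      · exact ⟨hw, hne, hwv⟩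
  have hdisj : Disjoint {w ∈ θ | w ≠ [] ∧ w ≤ v} (pending θ v) :=
    Set.disjoint_left.2 fun _ h h' => h.2.2.not_gt h'.2.2.2
  rw [hsplit, Set.ncard_union_eq hdisj (hfin.subset fun _ h => h.1) (hfin.subset fun _ h => h.1),
    ncard_nonroot_le_eq_rank hθ hfin hv]

theorem luk_rank_eq_ncard_pending (hθ : IsPlaneTree θ) (hfin : θ.Finite) {v : List ℕ}
    (hv : v ∈ θ) : luk θ (rank θ v) = (pending θ v).ncard := by
  have hpred : {u ∈ θ | rank θ u < rank θ v} = {u ∈ θ | u < v} := by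
    ext u
    simp only [Set.mem_ofPred_eq, and_congr_right_iff]
    exact fun hu => (rank_strictMonoOn hfin).lt_iff_lt hu hv
  have hpred_fin : {u ∈ θ | u < v}.Finite := hfin.subset (Set.sep_subset _ _)
  have hcount : ∑ᶠ u ∈ {u ∈ θ | u < v}, (1 : ℤ) = rank θ v := by
    rw [rank, ← finsum_one, Nat.cast_finsum_mem hpred_fin, Nat.cast_one]
  rw [luk, hpred, finsum_mem_sub_distrib _ _ hpred_fin, hcount, ← Nat.cast_finsum_mem hpred_fin,
    sum_kv_eq_ncard hθ hfin, ncard_dropLast_lt_eq_rank_add hθ hfin hv]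
  push_cast
  ring

theorem pending_subset_of_isPrefix {u x : List ℕ} (hux : u <+: x) :
    pending θ u ⊆ pending θ x := by
  rintro w ⟨hw, hne, hwu, huw⟩
  obtain ⟨q, a, rfl⟩ := (List.eq_nil_or_concat' w).resolve_left hne
  rw [List.dropLast_concat] at hwu
  obtain ⟨c, u', rfl, hca⟩ := List.exists_cons_of_lt_of_lt_append_singleton hwu huw
  obtain ⟨r, rfl⟩ := hux
  refine ⟨hw, hne, by simpa using q.lt_append_of_ne_nil (List.cons_ne_nil c (u' ++ r)), ?_⟩
  simpa using (List.append_lt_append_left_iff q).2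
    (List.cons_lt_cons_iff.2 (Or.inl hca) : c :: (u' ++ r) < [a])

theorem exists_pending_ssubset (hθ : IsPlaneTree θ) {u v : List ℕ} (hv : v ∈ θ) (huv : u < v)
    (hnp : ¬u <+: v) : ∃ x ∈ θ, u < x ∧ x ≤ v ∧ pending θ x ⊂ pending θ u := by
  obtain hp | ⟨p, s, t, u', v', hst, rfl, rfl⟩ := List.isPrefix_or_exists_of_lt huv
  · exact absurd hp hnp
  -- `p ++ [s + 1]`, the next sibling of the branch containing `u`, is on the stack at `u`
  -- but no longer at itself.
  have hxθ : p ++ [s + 1] ∈ θ :=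
    hθ.append_singleton_mem_of_le (hθ.mem_of_isPrefix hv ⟨v', by simp⟩) (by omega) hst
  have hpu : p < p ++ s :: u' := p.lt_append_of_ne_nil (List.cons_ne_nil _ _)
  have hux : p ++ s :: u' < p ++ [s + 1] :=
    (List.append_lt_append_left_iff p).2 (List.cons_lt_cons_iff.2 (Or.inl (lt_add_one s)))
  have hxv : p ++ [s + 1] ≤ p ++ t :: v' := not_lt.1 fun h => by
    simp [List.append_lt_append_left_iff, List.cons_lt_cons_iff] at h
    omega
  refine ⟨p ++ [s + 1], hxθ, hux, hxv, fun w ⟨hw, hne, hwx, hxw⟩ => ⟨hw, hne, ?_, hux.trans hxw⟩,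
    fun hsub => lt_irrefl _ (hsub ⟨hxθ, by simp, by simpa using hpu, hux⟩).2.2.2⟩
  obtain ⟨q, a, rfl⟩ := (List.eq_nil_or_concat' w).resolve_left hne
  rw [List.dropLast_concat] at hwx ⊢
  obtain ⟨c, x', hx, -⟩ := List.exists_cons_of_lt_of_lt_append_singleton hwx hxw
  have hqp : q <+: p := List.prefix_of_prefix_length_le ⟨c :: x', hx.symm⟩ (List.prefix_append _ _)
    (by have := congrArg List.length hx; simp at this; omega)
  obtain ⟨r, rfl⟩ := hqp
  simpa using q.lt_append_of_ne_nil (t := r ++ s :: u') (by simp)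

theorem isPrefix_iff_forall_luk_le (hθ : IsPlaneTree θ) (hfin : θ.Finite) {x v : List ℕ}
    (hx : x ∈ θ) (hv : v ∈ θ) (hxv : x ≤ v) :
    x <+: v ↔ ∀ j, rank θ x ≤ j → j ≤ rank θ v → luk θ (rank θ x) ≤ luk θ j := by
  have hmono := rank_strictMonoOn hfin
  have hpending_fin : ∀ y, (pending θ y).Finite := fun y => hfin.subset fun _ h => h.1
  constructor
  · intro hpre j hxj hjv
    obtain ⟨y, hy, rfl⟩ := rank_surjOn hfin (hjv.trans_lt (rank_lt_ncard hfin hv))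
    have hpy : x <+: y := hpre.isPrefix_of_le_of_le ((hmono.le_iff_le hx hy).1 hxj)
      ((hmono.le_iff_le hy hv).1 hjv)
    rw [luk_rank_eq_ncard_pending hθ hfin hx, luk_rank_eq_ncard_pending hθ hfin hy]
    exact_mod_cast Set.ncard_le_ncard (pending_subset_of_isPrefix hpy) (hpending_fin y)
  · intro hmin
    by_contra hnp
    obtain ⟨y, hy, hxy, hyv, hss⟩ :=
      exists_pending_ssubset hθ hv (hxv.lt_of_ne fun h => hnp (h ▸ List.prefix_rfl)) hnp
    have hle := hmin (rank θ y) ((hmono.le_iff_le hx hy).2 hxy.le) ((hmono.le_iff_le hy hv).2 hyv)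
    rw [luk_rank_eq_ncard_pending hθ hfin hx, luk_rank_eq_ncard_pending hθ hfin hy] at hle
    exact (Set.ncard_lt_ncard hss (hpending_fin x)).not_ge (by exact_mod_cast hle)

theorem filter_luk_min_eq_image_rank_take (hθ : IsPlaneTree θ) (hfin : θ.Finite) {v : List ℕ}
    (hv : v ∈ θ) :
    (Finset.range (rank θ v)).filter (fun k => ∀ j, k ≤ j → j ≤ rank θ v → luk θ k ≤ luk θ j) =
      (Finset.range v.length).image fun i => rank θ (v.take i) := by
  have hmono := rank_strictMonoOn hfin
  have htake : ∀ i, v.take i ∈ θ := fun i => hθ.mem_of_isPrefix hv (v.take_prefix i)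
  have htake_lt : ∀ i < v.length, v.take i < v := fun i hi => by
    simpa using (v.take i).lt_append_of_ne_nil (t := v.drop i) (by simpa using hi)
  ext k
  simp only [Finset.mem_filter, Finset.mem_range, Finset.mem_image]
  constructor
  · rintro ⟨hk, hmin⟩
    obtain ⟨x, hx, rfl⟩ := rank_surjOn hfin (hk.trans (rank_lt_ncard hfin hv))
    have hxv : x < v := (hmono.lt_iff_lt hx hv).1 hk
    have hpre := (isPrefix_iff_forall_luk_le hθ hfin hx hv hxv.le).2 hmin
    refine ⟨x.length, hpre.length_le.lt_of_ne fun h => hxv.ne (hpre.eq_of_length h), ?_⟩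
    rw [← List.prefix_iff_eq_take.1 hpre]
  · rintro ⟨i, hi, rfl⟩
    exact ⟨(hmono.lt_iff_lt (htake i) hv).2 (htake_lt i hi),
      (isPrefix_iff_forall_luk_le hθ hfin (htake i) hv (htake_lt i hi).le).1 (v.take_prefix i)⟩

theorem height_eq_card_min_general (θ : Set (List ℕ)) (hθ : IsPlaneTree θ) (hfin : θ.Finite)
    (n : ℕ) (v : List ℕ) (hv : v ∈ θ) (hrk : rank θ v = n) :
    v.length = ((Finset.range n).filter
      (fun k => ∀ j : ℕ, k ≤ j → j ≤ n → luk θ k ≤ luk θ j)).card := by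
  subst hrk
  rw [filter_luk_min_eq_image_rank_take hθ hfin hv, Finset.card_image_of_injOn, Finset.card_range]
  intro a ha b hb hab
  have := congrArg List.length
    ((rank_strictMonoOn hfin).injOn (hθ.mem_of_isPrefix hv (v.take_prefix a))
      (hθ.mem_of_isPrefix hv (v.take_prefix b)) hab)
  simp only [Finset.coe_range, Set.mem_Iio, List.length_take] at ha hb this
  omega

/-- Height function from the Lukaciewicz path: if `v` is the vertex of
rank `n` in the lexicographic order of a finite plane tree `θ`, then its height
`H(n) = |v|` equals `#{k < n : V(k) = min(V(k),…,V(n))}`. -/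
theorem height_eq_card_min (θ : Set (List ℕ)) (hθ : IsPlaneTree θ) (hfin : θ.Finite)
    (n : ℕ) (hn : n + 1 ≤ θ.ncard) (v : List ℕ) (hv : v ∈ θ) (hrk : rank θ v = n) :
    v.length = ((Finset.range n).filter
      (fun k => ∀ j : ℕ, k ≤ j → j ≤ n → luk θ k ≤ luk θ j)).card :=
  height_eq_card_min_general θ hθ hfin n v hv hrk

end IPC
end

section
/- Fix an integer σ ≥ 1 and let T be a (z,θ)-tree in which every vertex of every θ_i has at most σ children. Let v = BB_j be a backbone vertex of T lying lexicographically strictly between θ_n and θ_{n+1} (equivalently ℓ_n < j ≤ ℓ_{n+1}), and let u be the lexicographically smallest non-backbone vertex of T with u ≥ v (namely, the root of the copy of θ_{n+1}). Then |#T^v − #T^u| ≤ 1 + ℓ_{n+1} − ℓ_n and |n(v,T) − n(u,T)| ≤ σ + z_{ℓ_{n+1}}. -/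
namespace IPC
/-- Address of the backbone vertex `BB_i` of a `(z,θ)`-tree: `BB_i` has `1 + z i`
children, the last of which is `BB_{i+1}`. -/
def bbz (z : ℕ → ℕ) : ℕ → List ℕ
  | 0 => []
  | i + 1 => bbz z i ++ [z i + 1]

/-- `cum z i = ∑_{m < i} z m`. -/
def cum (z : ℕ → ℕ) (i : ℕ) : ℕ := ∑ m ∈ Finset.range i, z m

/-- `ell z n = ℓ_n`: the height of the backbone vertex to which `θ n` is attached,
i.e. the unique `i` with `cum z i ≤ n < cum z (i+1)` (when `∑ z` diverges). -/
noncomputable def ell (z : ℕ → ℕ) (n : ℕ) : ℕ := sInf {i : ℕ | n < cum z (i + 1)}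

/-- `graftPt z n = u_n`: the `n`-th non-backbone child of a backbone vertex in
lexicographic order; the root of the copy of `θ n`. -/
noncomputable def graftPt (z : ℕ → ℕ) (n : ℕ) : List ℕ :=
  bbz z (ell z n) ++ [n - cum z (ell z n) + 1]

/-- The `(z,θ)`-tree: the sin-tree whose backbone is its rightmost branch, in which
`BB_i` has `1 + z i` children (the last being `BB_{i+1}`), and in which the subtree
rooted at the `n`-th non-backbone child `u_n` of a backbone vertex is a copy of `θ n`. -/
noncomputable def zTree (z : ℕ → ℕ) (θ : ℕ → Set (List ℕ)) : Set (List ℕ) :=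
  Set.range (bbz z) ∪ ⋃ n, (fun w => graftPt z n ++ w) '' θ n

/-!
A vertex of the `(z,θ)`-tree is either a backbone vertex `BB_i` or a vertex `u_m ++ w` of the
copy of `θ_m`, and comparing first differing coordinates shows `BB_i < u_m ++ w` iff
`i ≤ ℓ_m`, while the copies are ordered by their index. Hence the vertices in `(BB_j, u_{n+1}]`
are exactly `BB_{j+1}, …, BB_{ℓ_{n+1}}` and `u_{n+1}`, which gives the first bound.

An edge `(p, p ++ [k])` leaves `T^y` exactly when `p = y` or `p ++ [k]` is a younger sibling of
a vertex on the path from the root to `y`. Since each `BB_{i+1}` is the youngest child of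
`BB_i`, for `y = BB_j` only the `z_j + 1` children of `BB_j` count, and for `y = u_{n+1}` only
the at most `σ` children of `u_{n+1}` and its at most `z_{ℓ_{n+1}}` younger siblings. As
`z_j = 0` unless `j = ℓ_{n+1}`, both counts lie in `[0, σ + z_{ℓ_{n+1}}]`.
-/

section LexOrder

variable {α : Type*} [LinearOrder α]

theorem le_of_isPrefix {l₁ l₂ : List α} (h : l₁ <+: l₂) : l₁ ≤ l₂ :=
  not_lt.1 h.le

theorem lt_append_of_ne_nil (l : List α) {t : List α} (ht : t ≠ []) : l < l ++ t := by
  obtain ⟨a, t, rfl⟩ := List.exists_cons_of_ne_nil ht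
  simpa using List.append_left_lt (l₁ := l) (List.nil_lt_cons a t)

theorem append_cons_lt_append_cons (l : List α) {a b : α} (s t : List α) (h : a < b) :
    l ++ a :: s < l ++ b :: t :=
  List.append_left_lt (List.cons_lt_cons_iff.2 (Or.inl h))

theorem eq_or_exists_of_le_of_lt_concat {p y : List α} {k : α} (h₁ : p ≤ y)
    (h₂ : y < p ++ [k]) : p = y ∨ ∃ i t, y = p ++ i :: t ∧ i < k := by
  induction p generalizing y with
  | nil =>
    rcases y with _ | ⟨i, t⟩
    · exact Or.inl rfl
    · refine Or.inr ⟨i, t, rfl, ?_⟩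
      simpa using List.cons_lt_cons_iff.1 h₂
  | cons a p ih =>
    rcases y with _ | ⟨b, y⟩
    · exact absurd h₁ (not_le.2 (List.nil_lt_cons a p))
    · rw [← not_lt, List.cons_lt_cons_iff, not_or, not_and] at h₁
      obtain rfl : b = a := by
        rcases List.cons_lt_cons_iff.1 h₂ with h | ⟨h, -⟩
        · exact absurd h h₁.1
        · exact h
      have h₂' : y < p ++ [k] := by
        simpa [lt_irrefl] using List.cons_lt_cons_iff.1 h₂
      rcases ih (not_lt.1 (h₁.2 rfl)) h₂' with rfl | ⟨i, t, rfl, hik⟩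
      · exact Or.inl rfl
      · exact Or.inr ⟨i, t, rfl, hik⟩

end LexOrder

theorem ncard_setOf_le_eq_add {α : Type*} [LinearOrder α] {T : Set α} {v u : α} (hvu : v ≤ u)
    (hfin : {x ∈ T | x ≤ u}.Finite) :
    {x ∈ T | x ≤ u}.ncard = {x ∈ T | x ≤ v}.ncard + {x ∈ T | v < x ∧ x ≤ u}.ncard := by
  have hsplit : {x ∈ T | x ≤ u} = {x ∈ T | x ≤ v} ∪ {x ∈ T | v < x ∧ x ≤ u} := by
    ext x
    simp only [Set.mem_ofPred_eq, Set.mem_union]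
    constructor
    · rintro ⟨hx, hxu⟩
      exact (le_or_gt x v).imp (fun h => ⟨hx, h⟩) fun h => ⟨hx, h, hxu⟩
    · rintro (⟨hx, hxv⟩ | ⟨hx, -, hxu⟩)
      exacts [⟨hx, hxv.trans hvu⟩, ⟨hx, hxu⟩]
  rw [hsplit] at hfin ⊢
  refine Set.ncard_union_eq ?_ (hfin.subset Set.subset_union_left)
    (hfin.subset Set.subset_union_right)
  exact Set.disjoint_left.2 fun x hx hx' => hx'.2.1.not_ge hx.2

theorem nEdge_le_ncard {T S : Set (List ℕ)} (hT : ∀ c ∈ T, c.dropLast ∈ T) (hS : S.Finite)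
    (y : List ℕ)
    (hsub : ∀ p k, p ++ [k] ∈ T → (p = y ∨ ∃ i t, y = p ++ i :: t ∧ i < k) → p ++ [k] ∈ S) :
    nEdge T y ≤ S.ncard := by
  refine Set.ncard_le_ncard ?_ hS
  rintro c ⟨hc, hne, hxor⟩
  obtain ⟨p, k, rfl⟩ := (List.eq_nil_or_concat' c).resolve_left hne
  rw [List.dropLast_concat] at hxor
  have hcross : p ≤ y ∧ y < p ++ [k] := by
    rcases hxor with ⟨⟨-, hp⟩, hc'⟩ | ⟨⟨-, hcy⟩, hp⟩
    · exact ⟨hp, lt_of_not_ge fun h => hc' ⟨hc, h⟩⟩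
    · have hpT : p ∈ T := by simpa using hT _ hc
      exact absurd ⟨hpT, (le_of_isPrefix (List.prefix_append p [k])).trans hcy⟩ hp
  exact hsub p k hc (eq_or_exists_of_le_of_lt_concat hcross.1 hcross.2)

section ZTree

variable {z : ℕ → ℕ} {θ : ℕ → Set (List ℕ)}

theorem bbz_length (z : ℕ → ℕ) : ∀ i, (bbz z i).length = i
  | 0 => rfl
  | i + 1 => by simp [bbz, bbz_length z i]

theorem bbz_prefix {i j : ℕ} (h : i ≤ j) : bbz z i <+: bbz z j := by
  induction j, h using Nat.le_induction with
  | base => exact List.prefix_refl _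
  | succ j _ ih => exact ih.trans (List.prefix_append _ _)

theorem exists_bbz_eq_of_prefix {u : List ℕ} {j : ℕ} (h : u <+: bbz z j) : ∃ i, bbz z i = u := by
  induction j with
  | zero => exact ⟨0, (List.prefix_nil.1 h).symm⟩
  | succ j ih =>
    rcases List.prefix_concat_iff.1 h with rfl | h'
    · exact ⟨j + 1, rfl⟩
    · exact ih h'

theorem bbz_strictMono : StrictMono (bbz z) := by
  refine strictMono_nat_of_lt_succ fun i => ?_
  exact lt_append_of_ne_nil _ (List.cons_ne_nil _ _)

theorem bbz_eq_append_cons {j i : ℕ} {p t : List ℕ} (h : bbz z j = p ++ i :: t) :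
    ∃ a, p = bbz z a ∧ i = z a + 1 := by
  obtain ⟨a, ha⟩ := exists_bbz_eq_of_prefix (z := z) (u := p ++ [i]) (j := j) ⟨t, by simp [h]⟩
  cases a with
  | zero => simp [bbz] at ha
  | succ a => exact ⟨a, by simpa [bbz, eq_comm] using ha⟩

theorem cum_mono : Monotone (cum z) := fun _ _ h =>
  Finset.sum_le_sum_of_subset (Finset.range_subset_range.2 h)

theorem cum_succ (i : ℕ) : cum z (i + 1) = cum z i + z i := Finset.sum_range_succ z i

theorem lt_cum_ell_succ (hz : ∀ N : ℕ, ∃ i : ℕ, N < cum z i) (n : ℕ) :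
    n < cum z (ell z n + 1) := by
  have hne : {i | n < cum z (i + 1)}.Nonempty := by
    obtain ⟨i, hi⟩ := hz n
    cases i with
    | zero => simp [cum] at hi
    | succ i => exact ⟨i, hi⟩
  exact Nat.sInf_mem hne

theorem cum_ell_le (n : ℕ) : cum z (ell z n) ≤ n := by
  rcases Nat.eq_zero_or_eq_succ_pred (ell z n) with h | h
  · simp [h, cum]
  · by_contra! hn
    rw [h] at hn
    have := Nat.sInf_le (s := {i | n < cum z (i + 1)}) hn
    rw [← ell] at this
    omega

theorem ell_mono (hz : ∀ N : ℕ, ∃ i : ℕ, N < cum z i) : Monotone (ell z) := fun _ m' h =>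
  Nat.sInf_le (lt_of_le_of_lt h (lt_cum_ell_succ hz m'))

theorem graftPt_label_le (hz : ∀ N : ℕ, ∃ i : ℕ, N < cum z i) (m : ℕ) :
    m - cum z (ell z m) + 1 ≤ z (ell z m) := by
  have := lt_cum_ell_succ hz m
  have := cum_ell_le (z := z) m
  rw [cum_succ] at *
  omega

theorem z_eq_zero_of_ell_lt_of_lt_ell (hz : ∀ N : ℕ, ∃ i : ℕ, N < cum z i) {n i : ℕ}
    (h₁ : ell z n < i) (h₂ : i < ell z (n + 1)) : z i = 0 := by
  have := lt_cum_ell_succ hz n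
  have := cum_mono (z := z) (show ell z n + 1 ≤ i by omega)
  have := cum_mono (z := z) (show i + 1 ≤ ell z (n + 1) by omega)
  have := cum_ell_le (z := z) (n + 1)
  have := cum_succ (z := z) i
  omega

theorem bbz_lt_graftPt_append {i m : ℕ} (h : i ≤ ell z m) (w : List ℕ) :
    bbz z i < graftPt z m ++ w := by
  refine (le_of_isPrefix (bbz_prefix h)).trans_lt ?_
  simpa [graftPt] using lt_append_of_ne_nil (bbz z (ell z m)) (List.cons_ne_nil _ w)

theorem graftPt_append_lt_bbz (hz : ∀ N : ℕ, ∃ i : ℕ, N < cum z i) {i m : ℕ} (h : ell z m < i)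
    (w : List ℕ) : graftPt z m ++ w < bbz z i := by
  obtain ⟨t, ht⟩ := bbz_prefix (z := z) (Nat.succ_le_of_lt h)
  rw [← ht, graftPt, bbz, List.append_assoc, List.append_assoc, List.singleton_append,
    List.singleton_append]
  exact append_cons_lt_append_cons _ _ _ (Nat.lt_succ_of_le (graftPt_label_le hz m))

theorem graftPt_append_lt_graftPt_append (hz : ∀ N : ℕ, ∃ i : ℕ, N < cum z i) {m m' : ℕ}
    (h : m < m') (w w' : List ℕ) : graftPt z m ++ w < graftPt z m' ++ w' := by
  rcases (ell_mono hz h.le).lt_or_eq with hl | hl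
  · exact (graftPt_append_lt_bbz hz hl w).trans (bbz_lt_graftPt_append le_rfl w')
  · have := cum_ell_le (z := z) m
    rw [hl] at this
    rw [graftPt, graftPt, hl, List.append_assoc, List.append_assoc, List.singleton_append,
      List.singleton_append]
    exact append_cons_lt_append_cons _ _ _ (by omega)

theorem mem_zTree {x : List ℕ} :
    x ∈ zTree z θ ↔ (∃ i, bbz z i = x) ∨ ∃ m, ∃ w ∈ θ m, graftPt z m ++ w = x := by
  simp [zTree]

theorem bbz_mem_zTree (i : ℕ) : bbz z i ∈ zTree z θ :=
  mem_zTree.2 (Or.inl ⟨i, rfl⟩)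

theorem graftPt_append_mem_zTree {m : ℕ} {w : List ℕ} (hw : w ∈ θ m) :
    graftPt z m ++ w ∈ zTree z θ :=
  mem_zTree.2 (Or.inr ⟨m, w, hw, rfl⟩)

theorem dropLast_mem_zTree (hθ : ∀ m, IsPlaneTree (θ m)) {c : List ℕ} (hc : c ∈ zTree z θ) :
    c.dropLast ∈ zTree z θ := by
  rcases mem_zTree.1 hc with ⟨_ | i, rfl⟩ | ⟨m, w, hw, rfl⟩
  · exact bbz_mem_zTree 0
  · simpa [bbz] using bbz_mem_zTree i
  · rcases w.eq_nil_or_concat' with rfl | ⟨w', k, rfl⟩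
    · simpa [graftPt] using bbz_mem_zTree (ell z m)
    · rw [← List.append_assoc, List.dropLast_concat]
      exact graftPt_append_mem_zTree ((hθ m).2.1 _ hw _ (List.prefix_append _ _))

theorem mem_of_graftPt_append_mem_zTree (hz : ∀ N : ℕ, ∃ i : ℕ, N < cum z i) {m : ℕ}
    {w : List ℕ} (h : graftPt z m ++ w ∈ zTree z θ) : w ∈ θ m := by
  rcases mem_zTree.1 h with ⟨i, hi⟩ | ⟨m', w', hw', he⟩
  · rcases le_or_gt i (ell z m) with hl | hl
    · exact absurd hi (bbz_lt_graftPt_append hl w).ne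
    · exact absurd hi (graftPt_append_lt_bbz hz hl w).ne'
  · obtain rfl : m' = m := by
      rcases lt_trichotomy m' m with hl | rfl | hl
      · exact absurd he (graftPt_append_lt_graftPt_append hz hl w' w).ne
      · rfl
      · exact absurd he (graftPt_append_lt_graftPt_append hz hl w w').ne'
    rwa [List.append_cancel_left he] at hw'

theorem label_le_of_bbz_append_mem_zTree (hz : ∀ N : ℕ, ∃ i : ℕ, N < cum z i) {i k : ℕ}
    (h : bbz z i ++ [k] ∈ zTree z θ) : 1 ≤ k ∧ k ≤ z i + 1 := by
  rcases mem_zTree.1 h with ⟨i', hi'⟩ | ⟨m, w, -, he⟩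
  · obtain rfl : i' = i + 1 := by simpa [bbz_length] using congrArg List.length hi'
    have : z i + 1 = k := by simpa [bbz] using hi'
    omega
  · rcases lt_trichotomy (ell z m) i with hl | rfl | hl
    · exact absurd he ((graftPt_append_lt_bbz hz hl w).trans_le
        (le_of_isPrefix (List.prefix_append _ _))).ne
    · have hk : m - cum z (ell z m) + 1 = k ∧ w = [] := by simpa [graftPt] using he
      have := graftPt_label_le hz m
      omega
    · have hpre : bbz z (i + 1) <+: bbz z i ++ [k] :=
        he ▸ (bbz_prefix hl).trans ⟨_, by rw [graftPt, List.append_assoc]⟩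
      have : z i + 1 = k := by simpa [bbz] using hpre
      omega

theorem nEdge_bbz_le (hz : ∀ N : ℕ, ∃ i : ℕ, N < cum z i) (hθ : ∀ m, IsPlaneTree (θ m))
    (j : ℕ) : nEdge (zTree z θ) (bbz z j) ≤ z j + 1 := by
  calc nEdge (zTree z θ) (bbz z j)
      ≤ ((bbz z j ++ [·]) '' Set.Icc 1 (z j + 1)).ncard := by
        refine nEdge_le_ncard (fun c => dropLast_mem_zTree hθ) ((Set.finite_Icc _ _).image _) _ ?_
        rintro p k hT (rfl | ⟨i, t, hy, hik⟩)
        · exact ⟨k, label_le_of_bbz_append_mem_zTree hz hT, rfl⟩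
        · -- every backbone vertex is the youngest child of its parent
          obtain ⟨a, rfl, rfl⟩ := bbz_eq_append_cons hy
          have := label_le_of_bbz_append_mem_zTree hz hT
          omega
    _ ≤ (Set.Icc 1 (z j + 1)).ncard := Set.ncard_image_le (Set.finite_Icc _ _)
    _ = z j + 1 := by simp

theorem nEdge_graftPt_le (hz : ∀ N : ℕ, ∃ i : ℕ, N < cum z i) (hθ : ∀ m, IsPlaneTree (θ m))
    (hfin : ∀ m, (θ m).Finite) (m : ℕ) :
    nEdge (zTree z θ) (graftPt z m) ≤ z (ell z m) + kv (θ m) [] := by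
  have hchildren : {k | [k] ∈ θ m}.Finite :=
    (hfin m).preimage fun _ _ _ _ h => List.singleton_injective h
  calc nEdge (zTree z θ) (graftPt z m)
      ≤ ((bbz z (ell z m) ++ [·]) '' Set.Ioc 1 (z (ell z m) + 1)
          ∪ (graftPt z m ++ [·]) '' {k | [k] ∈ θ m}).ncard := by
        refine nEdge_le_ncard (fun c => dropLast_mem_zTree hθ)
          (((Set.finite_Ioc _ _).image _).union (hchildren.image _)) _ ?_
        rintro p k hT (rfl | ⟨i, t, hy, hik⟩)
        · exact Or.inr ⟨k, mem_of_graftPt_append_mem_zTree hz hT, rfl⟩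
        rcases t.eq_nil_or_concat' with rfl | ⟨t, x, rfl⟩
        · obtain ⟨rfl, rfl⟩ : bbz z (ell z m) = p ∧ m - cum z (ell z m) + 1 = i := by
            simpa [graftPt] using hy
          have := label_le_of_bbz_append_mem_zTree hz hT
          exact Or.inl ⟨k, ⟨by omega, this.2⟩, rfl⟩
        · have hy' : bbz z (ell z m) ++ [m - cum z (ell z m) + 1] = p ++ i :: t ++ [x] := by
            rw [← graftPt, hy]
            simp
          have hbb := (List.append_inj' hy' rfl).1
          obtain ⟨a, rfl, rfl⟩ := bbz_eq_append_cons hbb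
          have := label_le_of_bbz_append_mem_zTree hz hT
          omega
    _ ≤ (Set.Ioc 1 (z (ell z m) + 1)).ncard + {k | [k] ∈ θ m}.ncard :=
        (Set.ncard_union_le _ _).trans
          (add_le_add (Set.ncard_image_le (Set.finite_Ioc _ _)) (Set.ncard_image_le hchildren))
    _ = z (ell z m) + kv (θ m) [] := by simp [kv]

theorem finite_setOf_le_graftPt (hz : ∀ N : ℕ, ∃ i : ℕ, N < cum z i)
    (hfin : ∀ m, (θ m).Finite) (m : ℕ) : {x ∈ zTree z θ | x ≤ graftPt z m}.Finite := by
  refine (((Set.finite_Iic (ell z m)).image (bbz z)).union ((Set.finite_Iic m).biUnion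
    fun m' _ => (hfin m').image (graftPt z m' ++ ·))).subset ?_
  rintro x ⟨hx, hxu⟩
  rcases mem_zTree.1 hx with ⟨i, rfl⟩ | ⟨m', w, hw, rfl⟩
  · refine Or.inl ⟨i, Set.mem_Iic.2 <| not_lt.1 fun h => hxu.not_gt ?_, rfl⟩
    simpa using graftPt_append_lt_bbz hz h []
  · refine Or.inr (Set.mem_biUnion (Set.mem_Iic.2 <| not_lt.1 fun h => hxu.not_gt ?_) ⟨w, hw, rfl⟩)
    simpa using graftPt_append_lt_graftPt_append hz h [] w

theorem setOf_bbz_lt_le_graftPt_succ (hz : ∀ N : ℕ, ∃ i : ℕ, N < cum z i) {n : ℕ}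
    (hroot : [] ∈ θ (n + 1)) {j : ℕ} (hj₁ : ell z n < j) (hj₂ : j ≤ ell z (n + 1)) :
    {x ∈ zTree z θ | bbz z j < x ∧ x ≤ graftPt z (n + 1)}
      = insert (graftPt z (n + 1)) (bbz z '' Set.Ioc j (ell z (n + 1))) := by
  ext x
  constructor
  · rintro ⟨hx, hvx, hxu⟩
    rcases mem_zTree.1 hx with ⟨i, rfl⟩ | ⟨m, w, -, rfl⟩
    · refine Or.inr ⟨i, ⟨bbz_strictMono.lt_iff_lt.1 hvx, not_lt.1 fun h => hxu.not_gt ?_⟩, rfl⟩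
      simpa using graftPt_append_lt_bbz hz h []
    · have hm₁ : n < m := not_le.1 fun h =>
        hvx.not_gt (graftPt_append_lt_bbz hz ((ell_mono hz h).trans_lt hj₁) w)
      have hm₂ : m ≤ n + 1 := not_lt.1 fun h =>
        hxu.not_gt (by simpa using graftPt_append_lt_graftPt_append hz h [] w)
      obtain rfl : m = n + 1 := by omega
      rcases eq_or_ne w [] with rfl | hw
      · simp
      · exact absurd hxu (not_le.2 (lt_append_of_ne_nil _ hw))
  · rintro (rfl | ⟨i, ⟨hji, hiℓ⟩, rfl⟩)
    · exact ⟨by simpa using graftPt_append_mem_zTree hroot,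
        by simpa using bbz_lt_graftPt_append hj₂ [], le_rfl⟩
    · exact ⟨bbz_mem_zTree i, bbz_strictMono hji, by simpa using (bbz_lt_graftPt_append hiℓ []).le⟩

theorem ncard_insert_graftPt_image_bbz (i j m : ℕ) (h : j ≤ ell z m) :
    (insert (graftPt z m) (bbz z '' Set.Ioc i j)).ncard = j - i + 1 := by
  rw [Set.ncard_insert_of_notMem, Set.ncard_image_of_injective _ bbz_strictMono.injective]
  · simp
  · rintro ⟨i', hi', he⟩
    exact (bbz_lt_graftPt_append (hi'.2.trans h) []).ne (by simpa using he)

end ZTree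

/-- Backbone displacement bounds in a `(z,θ)`-tree whose trees `θ i`
have offspring numbers at most `σ`: if `v = BB_j` is a backbone vertex lying
lexicographically strictly between the copies of `θ n` and `θ (n+1)`
(i.e. `ℓ_n < j ≤ ℓ_{n+1}`), and `u = u_{n+1}` is the root of the copy of `θ (n+1)`
(the smallest non-backbone vertex `≥ v`), then
`|#T^v − #T^u| ≤ 1 + ℓ_{n+1} − ℓ_n` and `|n(v,T) − n(u,T)| ≤ σ + z_{ℓ_{n+1}}`. -/
theorem zTree_backbone_displacement (σ : ℕ) (hσ : 1 ≤ σ)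
    (z : ℕ → ℕ) (θ : ℕ → Set (List ℕ))
    (hθ : ∀ i, IsPlaneTree (θ i)) (hfin : ∀ i, (θ i).Finite)
    (hdeg : ∀ i, ∀ w ∈ θ i, kv (θ i) w ≤ σ)
    (hz : ∀ N : ℕ, ∃ i : ℕ, N < cum z i)
    (n j : ℕ) (hj₁ : ell z n < j) (hj₂ : j ≤ ell z (n + 1)) :
    (|({x ∈ zTree z θ | x ≤ bbz z j}.ncard : ℤ)
        - ({x ∈ zTree z θ | x ≤ graftPt z (n + 1)}.ncard : ℤ)|
      ≤ 1 + (ell z (n + 1) : ℤ) - (ell z n : ℤ)) ∧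
    |(nEdge (zTree z θ) (bbz z j) : ℤ) - (nEdge (zTree z θ) (graftPt z (n + 1)) : ℤ)|
      ≤ (σ : ℤ) + (z (ell z (n + 1)) : ℤ) := by
  refine ⟨?_, ?_⟩
  · have hvu : bbz z j ≤ graftPt z (n + 1) := by
      simpa using (bbz_lt_graftPt_append (z := z) hj₂ []).le
    rw [ncard_setOf_le_eq_add hvu (finite_setOf_le_graftPt hz hfin _),
      setOf_bbz_lt_le_graftPt_succ hz (hθ _).1 hj₁ hj₂,
      ncard_insert_graftPt_image_bbz _ _ _ le_rfl, abs_le]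
    constructor <;> push_cast <;> omega
  · have hv := nEdge_bbz_le hz hθ j
    have hu := nEdge_graftPt_le hz hθ hfin (n + 1)
    have hroot := hdeg (n + 1) [] (hθ (n + 1)).1
    have hzj : z j ≤ z (ell z (n + 1)) := by
      rcases hj₂.lt_or_eq with h | rfl
      · simp [z_eq_zero_of_ell_lt_of_lt_ell hz hj₁ h]
      · exact le_rfl
    rw [abs_le]
    constructor <;> omega

end IPC
end
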